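/- In ℤ² with the lexicographic order, with A := {(x,y) : (x,y) > (0,0)} and nA the n-fold sumset, the element (1,0) belongs to ⋂_{n≥1} nA; in particular ⋂_{n≥1} nA ≠ ∅. -/

import Mathlib

open Pointwise

/-- The set of lexicographically positive elements of ℤ². -/
def Apos : Set (ℤ × ℤ) := {p : ℤ × ℤ | 0 < p.1 ∨ (p.1 = 0 ∧ 0 < p.2)}

/-- `nFoldSum n` is the (n+1)-fold sumset A + A + ⋯ + A. -/
def nFoldSum : ℕ → Set (ℤ × ℤ)
  | 0 => Apos
  | n + 1 => nFoldSum n + Apos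

/-! A point `(a, b)` with `a > 0` is `(a, b - n) + n • (0, 1)`: the first summand is positive
whatever its second coordinate, so `(a, b)` lies in every sumset `nA`. -/

theorem mem_nFoldSum_of_fst_pos (n : ℕ) {p : ℤ × ℤ} (hp : 0 < p.1) : p ∈ nFoldSum n := by
  induction n generalizing p with
  | zero => exact Or.inl hp
  | succ n ih =>
    refine ⟨(p.1, p.2 - 1), ih hp, (0, 1), Or.inr ⟨rfl, one_pos⟩, ?_⟩
    simp

/-- In ℤ² with the lexicographic order, (1, 0) belongs to ⋂_{n ≥ 1} nA; in
particular this intersection is nonempty. -/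
theorem stmt_14 :
    (((1 : ℤ), (0 : ℤ)) ∈ ⋂ n : ℕ, nFoldSum n) ∧
      (⋂ n : ℕ, nFoldSum n).Nonempty := by
  have h : ((1 : ℤ), (0 : ℤ)) ∈ ⋂ n : ℕ, nFoldSum n :=
    Set.mem_iInter.2 fun n => mem_nFoldSum_of_fst_pos n one_pos
  exact ⟨h, ⟨_, h⟩⟩
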